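/- Let F be a function on 2×2 complex symmetric matrices satisfying F(γ·M) = det(CM+D)^k F(M) for all γ ∈ Sp(4,ℤ). Let σ₆ = diag(ρ, i) with ρ = e^{2πi/3}. If k is not divisible by 12, then F(σ₆) = 0. -/
import Mathlib


open Matrix

/-- The standard symplectic form `J = [[0, I], [-I, 0]]` over ℤ. -/
def symplJ (g : ℕ) : Matrix (Fin g ⊕ Fin g) (Fin g ⊕ Fin g) ℤ :=
  Matrix.fromBlocks 0 1 (-1) 0

noncomputable def rho3 : ℂ := Complex.exp (2 * Real.pi * Complex.I / 3)

/-- The fixed point `σ₆ = diag(ρ, i)` with `ρ = e^{2πi/3}`. -/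
noncomputable def sigma6 : Matrix (Fin 2) (Fin 2) ℂ := !![rho3, 0; 0, Complex.I]

/-- A weight-`k` Siegel modular form (trivial multiplier) vanishes at `σ₆ = diag(ρ,i)` unless `12 ∣ k`. -/
theorem stmt15 (k : ℤ) (F : Matrix (Fin 2) (Fin 2) ℂ → ℂ)
    (hF : ∀ A B C D : Matrix (Fin 2) (Fin 2) ℤ,
      Matrix.fromBlocks A B C D * symplJ 2 * (Matrix.fromBlocks A B C D)ᵀ = symplJ 2 →
      ∀ M : Matrix (Fin 2) (Fin 2) ℂ, Mᵀ = M →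
      IsUnit (C.map (Int.cast : ℤ → ℂ) * M + D.map (Int.cast : ℤ → ℂ)) →
      F ((A.map (Int.cast : ℤ → ℂ) * M + B.map (Int.cast : ℤ → ℂ)) *
          (C.map (Int.cast : ℤ → ℂ) * M + D.map (Int.cast : ℤ → ℂ))⁻¹) =
        ((C.map (Int.cast : ℤ → ℂ) * M + D.map (Int.cast : ℤ → ℂ)).det) ^ k * F M)
    (hk : ¬ ((12:ℤ) ∣ k)) :
    F sigma6 = 0 := by
  -- basic complex number facts
  set w : ℂ := Complex.exp (↑Real.pi * Complex.I / 3) with hw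
  have hw3 : w ^ 3 = -1 := by
    rw [hw, ← Complex.exp_nat_mul,
      show ((3:ℕ):ℂ) * (↑Real.pi * Complex.I / 3) = ↑Real.pi * Complex.I by push_cast; ring,
      Complex.exp_pi_mul_I]
  have hwne : w ≠ -1 := by
    intro h
    have h1 : w.re = -1 := by rw [h]; simp
    rw [hw, show (↑Real.pi * Complex.I / 3 : ℂ) = ↑(Real.pi/3) * Complex.I by push_cast; ring,
      Complex.exp_ofReal_mul_I_re] at h1
    have h2 := Real.cos_pos_of_mem_Ioo (show Real.pi/3 ∈ Set.Ioo (-(Real.pi/2)) (Real.pi/2) by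
      constructor <;> nlinarith [Real.pi_pos])
    linarith
  have hquad : w ^ 2 - w + 1 = 0 := by
    have hfac : (w + 1) * (w ^ 2 - w + 1) = 0 := by linear_combination hw3
    rcases mul_eq_zero.mp hfac with h | h
    · exact absurd (eq_neg_of_add_eq_zero_left h) hwne
    · exact h
  have hrho : rho3 = w ^ 2 := by
    rw [rho3, hw, ← Complex.exp_nat_mul]
    congr 1
    push_cast; ring
  have hIexp : Complex.exp (↑Real.pi * Complex.I / 2) = Complex.I := by
    rw [show (↑Real.pi * Complex.I / 2 : ℂ) = ↑(Real.pi/2) * Complex.I by push_cast; ring,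
      Complex.exp_mul_I, ← Complex.ofReal_cos, ← Complex.ofReal_sin,
      Real.cos_pi_div_two, Real.sin_pi_div_two]
    simp
  have hzeta : w * Complex.I = Complex.exp (5 * ↑Real.pi * Complex.I / 6) := by
    rw [show (5 * ↑Real.pi * Complex.I / 6 : ℂ)
        = ↑Real.pi * Complex.I / 3 + ↑Real.pi * Complex.I / 2 by ring,
      Complex.exp_add, hIexp, hw]
  -- zeta^k ≠ 1
  have hzk : (w * Complex.I) ^ k ≠ 1 := by
    rw [hzeta, ← Complex.exp_int_mul]
    intro h
    rw [Complex.exp_eq_one_iff] at h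
    obtain ⟨n, hn⟩ := h
    have hpiI : (↑Real.pi * Complex.I : ℂ) ≠ 0 :=
      mul_ne_zero (Complex.ofReal_ne_zero.mpr Real.pi_ne_zero) Complex.I_ne_zero
    have h5 : ((5 * k : ℤ) : ℂ) * (↑Real.pi * Complex.I) = ((12 * n : ℤ) : ℂ) * (↑Real.pi * Complex.I) := by
      push_cast
      linear_combination 6 * hn
    have h6 : (5 * k : ℤ) = 12 * n := by
      have := mul_right_cancel₀ hpiI h5
      exact_mod_cast this
    exact hk (by omega)
  -- the matrices
  have hquad' : rho3 ^ 2 + rho3 + 1 = 0 := by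
    rw [hrho]; linear_combination (w ^ 2 + w + 1) * hquad
  have hrw : rho3 + 1 = w := by rw [hrho]; linear_combination hquad
  set A : Matrix (Fin 2) (Fin 2) ℤ := !![0,0;0,0] with hA
  set B : Matrix (Fin 2) (Fin 2) ℤ := !![1,0;0,1] with hB
  set C : Matrix (Fin 2) (Fin 2) ℤ := !![-1,0;0,-1] with hC
  set D : Matrix (Fin 2) (Fin 2) ℤ := !![-1,0;0,0] with hD
  have hsymp : Matrix.fromBlocks A B C D * symplJ 2 * (Matrix.fromBlocks A B C D)ᵀ = symplJ 2 := by
    decide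
  have hAm : A.map (Int.cast : ℤ → ℂ) = !![0,0;0,0] := by
    ext i j; fin_cases i <;> fin_cases j <;> simp [hA]
  have hBm : B.map (Int.cast : ℤ → ℂ) = !![1,0;0,1] := by
    ext i j; fin_cases i <;> fin_cases j <;> simp [hB]
  have hCm : C.map (Int.cast : ℤ → ℂ) = !![-1,0;0,-1] := by
    ext i j; fin_cases i <;> fin_cases j <;> simp [hC]
  have hDm : D.map (Int.cast : ℤ → ℂ) = !![-1,0;0,0] := by
    ext i j; fin_cases i <;> fin_cases j <;> simp [hD]
  have hN : C.map (Int.cast : ℤ → ℂ) * sigma6 + D.map (Int.cast : ℤ → ℂ)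
      = !![-rho3 - 1, 0; 0, -Complex.I] := by
    rw [hCm, hDm, sigma6]
    ext i j; fin_cases i <;> fin_cases j <;>
      simp [Matrix.mul_apply, Fin.sum_univ_two] <;> ring
  have hNs : (!![-rho3 - 1, 0; 0, -Complex.I] : Matrix (Fin 2) (Fin 2) ℂ) * sigma6 = 1 := by
    rw [sigma6]
    ext i j; fin_cases i <;> fin_cases j <;>
      simp [Matrix.mul_apply, Fin.sum_univ_two, Matrix.one_apply, Complex.I_mul_I] <;>
      linear_combination -hquad'
  have hdet : (!![-rho3 - 1, 0; 0, -Complex.I] : Matrix (Fin 2) (Fin 2) ℂ).det = w * Complex.I := by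
    rw [Matrix.det_fin_two_of]
    linear_combination Complex.I * hrw
  have hUnit : IsUnit (C.map (Int.cast : ℤ → ℂ) * sigma6 + D.map (Int.cast : ℤ → ℂ)) := by
    rw [hN, Matrix.isUnit_iff_isUnit_det, hdet, hzeta, isUnit_iff_ne_zero]
    exact Complex.exp_ne_zero _
  have hsym : sigma6ᵀ = sigma6 := by
    rw [sigma6]; ext i j; fin_cases i <;> fin_cases j <;> simp
  have key := hF A B C D hsymp sigma6 hsym hUnit
  rw [hN, hAm, hBm, Matrix.inv_eq_right_inv hNs, hdet] at key
  have hred : (!![(0:ℂ),0;0,0] * sigma6 + !![1,0;0,1]) * sigma6 = sigma6 := by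
    ext i j; fin_cases i <;> fin_cases j <;>
      simp [sigma6, Matrix.mul_apply, Fin.sum_univ_two]
  rw [hred] at key
  have : (1 - (w * Complex.I) ^ k) * F sigma6 = 0 := by linear_combination key
  rcases mul_eq_zero.mp this with h | h
  · exact absurd (by linear_combination -h) hzk
  · exact h
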